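/- Define Ω_{η,γ}(z) = η·exp(iπ(z-1))·Θ(z) + γ·exp(iπz)·Θ(z-1)·φ with Θ(z) = (φ^z - exp(iπz)φ^(-z))/√5. Then for all η, γ, z ∈ ℂ, Ω_{η,γ}(z) = Ω_{η,γ}(z-2) - Ω_{η,γ}(z-1). -/

import Mathlib

noncomputable def phiC : ℂ := (1 + Real.sqrt 5) / 2

noncomputable def Theta (z : ℂ) : ℂ :=
  (Complex.exp (z * Complex.log phiC) -
      Complex.exp (Real.pi * Complex.I * z) * Complex.exp (-z * Complex.log phiC)) /
    (Real.sqrt 5 : ℂ)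

noncomputable def Omega (η γ : ℂ) (z : ℂ) : ℂ :=
  η * Complex.exp (Real.pi * Complex.I * (z - 1)) * Theta z +
    γ * Complex.exp (Real.pi * Complex.I * z) * Theta (z - 1) * phiC

/-!
`Theta` is a Binet formula: it is a combination of `exp (z * w)` for `exp w = φ` and
`exp w = -φ⁻¹`, the two roots of `x ^ 2 = x + 1`, so it satisfies the Fibonacci recurrence
in `z`. Since `exp (π i (z - 1)) = -exp (π i z)`, both summands of `Omega` pick up the sign
that turns this recurrence into `Ω(z) = Ω(z - 2) - Ω(z - 1)`.
-/

open Complex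

lemma phiC_sq : phiC ^ 2 = phiC + 1 := by
  have h5 : ((Real.sqrt 5 : ℝ) : ℂ) ^ 2 = 5 := by
    rw [← ofReal_pow, Real.sq_sqrt (by norm_num)]
    norm_num
  unfold phiC
  linear_combination h5 / 4

lemma phiC_ne_zero : phiC ≠ 0 := by
  intro h
  simpa [h] using phiC_sq

lemma Complex.exp_mul_eq_exp_sub_one_mul_add_exp_sub_two_mul {w : ℂ}
    (hw : exp w ^ 2 = exp w + 1) (z : ℂ) :
    exp (z * w) = exp ((z - 1) * w) + exp ((z - 2) * w) := by
  rw [show z * w = (z - 2) * w + w + w by ring, show (z - 1) * w = (z - 2) * w + w by ring]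
  simp only [exp_add]
  linear_combination exp ((z - 2) * w) * hw

lemma exp_pi_mul_I_mul_sub_one (z : ℂ) :
    exp (Real.pi * I * (z - 1)) = -exp (Real.pi * I * z) := by
  rw [mul_sub, mul_one, exp_sub, exp_pi_mul_I]
  ring

lemma Theta_eq (z : ℂ) :
    Theta z = (exp (z * log phiC) - exp (z * (Real.pi * I - log phiC))) / (Real.sqrt 5 : ℂ) := by
  rw [Theta, ← exp_add]
  ring_nf

lemma Theta_eq_Theta_sub_one_add_Theta_sub_two (z : ℂ) :
    Theta z = Theta (z - 1) + Theta (z - 2) := by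
  have hφ : exp (log phiC) = phiC := exp_log phiC_ne_zero
  have hroot : exp (log phiC) ^ 2 = exp (log phiC) + 1 := by rw [hφ, phiC_sq]
  have hconj : exp (Real.pi * I - log phiC) ^ 2 = exp (Real.pi * I - log phiC) + 1 := by
    rw [exp_sub, exp_pi_mul_I, hφ]
    field_simp [phiC_ne_zero]
    linear_combination -phiC_sq
  simp only [Theta_eq, exp_mul_eq_exp_sub_one_mul_add_exp_sub_two_mul hroot z,
    exp_mul_eq_exp_sub_one_mul_add_exp_sub_two_mul hconj z]
  ring

lemma Omega_eq (η γ z : ℂ) :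
    Omega η γ z = exp (Real.pi * I * z) * (γ * phiC * Theta (z - 1) - η * Theta z) := by
  rw [Omega, exp_pi_mul_I_mul_sub_one]
  ring

theorem Omega_recurrence (η γ z : ℂ) :
    Omega η γ z = Omega η γ (z - 2) - Omega η γ (z - 1) := by
  have hsign : exp (Real.pi * I * (z - 2)) = exp (Real.pi * I * z) := by
    rw [show z - 2 = z - 1 - 1 by ring, exp_pi_mul_I_mul_sub_one, exp_pi_mul_I_mul_sub_one,
      neg_neg]
  rw [Omega_eq, Omega_eq, Omega_eq, hsign, exp_pi_mul_I_mul_sub_one,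
    Theta_eq_Theta_sub_one_add_Theta_sub_two z, Theta_eq_Theta_sub_one_add_Theta_sub_two (z - 1),
    show z - 1 - 1 = z - 2 by ring, show z - 1 - 2 = z - 2 - 1 by ring]
  ring
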